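/- arXiv:1801.02423 — 2 statements merged into one kernel-verified Lean document; each statement's English description precedes it below -/
import Mathlib

section
/- For each vertex v in [n] and any set X of d-faces with linearly independent boundary columns, the d-faces of SH(X) containing v have linearly independent boundary columns, and hence their number is at most |X|. -/
open Matrix

def boundaryMatrix (n d : ℕ) :
    Matrix {s : Finset (Fin n) // s.card = d} {s : Finset (Fin n) // s.card = d + 1} ℚ :=
  fun τ σ =>
    if τ.1 ⊆ σ.1 then
      ∑ v ∈ σ.1 \ τ.1, (-1 : ℚ) ^ ((σ.1.filter (fun w => w < v)).card)
    else 0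

lemma star_indep (n d : ℕ) (v : Fin n) :
    LinearIndependent ℚ (fun σ : {σ : {s : Finset (Fin n) // s.card = d + 1} // v ∈ σ.1.1} =>
      (boundaryMatrix n d)ᵀ σ.1) := by
  rw [Fintype.linearIndependent_iff]
  intro g hg σ₀
  have hv : v ∈ σ₀.1.1 := σ₀.2
  have hτc : (σ₀.1.1.erase v).card = d := by
    simp [Finset.card_erase_of_mem hv, σ₀.1.2]
  set τ : {s : Finset (Fin n) // s.card = d} := ⟨σ₀.1.1.erase v, hτc⟩ with hτ
  have h := congrFun hg τ
  simp only [Finset.sum_apply, Pi.smul_apply, transpose_apply, smul_eq_mul,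
    Pi.zero_apply] at h
  have hzero : ∀ σ : {σ : {s : Finset (Fin n) // s.card = d + 1} // v ∈ σ.1.1},
      σ ≠ σ₀ → boundaryMatrix n d τ σ.1 = 0 := by
    intro σ hne
    unfold boundaryMatrix
    rw [if_neg]
    intro hsub
    apply hne
    have h1 : σ₀.1.1 ⊆ σ.1.1 := by
      intro x hx
      by_cases hxv : x = v
      · exact hxv ▸ σ.2
      · exact hsub (Finset.mem_erase.mpr ⟨hxv, hx⟩)
    have h2 : σ₀.1.1 = σ.1.1 :=
      Finset.eq_of_subset_of_card_le h1 (by rw [σ.1.2, σ₀.1.2])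
    exact Subtype.ext (Subtype.ext h2.symm)
  have hdiag : boundaryMatrix n d τ σ₀.1 ≠ 0 := by
    unfold boundaryMatrix
    rw [if_pos (Finset.erase_subset _ _)]
    have : σ₀.1.1 \ σ₀.1.1.erase v = {v} := Finset.sdiff_erase_self hv
    rw [show τ.1 = σ₀.1.1.erase v from rfl, this, Finset.sum_singleton]
    exact pow_ne_zero _ (by norm_num)
  rw [Finset.sum_eq_single σ₀ (fun σ _ hne => by rw [hzero σ hne, mul_zero])
    (fun h' => absurd (Finset.mem_univ σ₀) h')] at h
  exact (mul_eq_zero.mp h).resolve_right hdiag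

/-- For a vertex `v` and a `d`-acyclic set `X` of `d`-faces, the faces of the
shadow `SH(X)` containing `v` have linearly independent boundary columns, and
hence there are at most `|X|` of them. -/
theorem shadow_star_indep (n d : ℕ) (hd : 1 ≤ d) (hn : d < n) (v : Fin n)
    (X : Finset {s : Finset (Fin n) // s.card = d + 1})
    (hX : LinearIndependent ℚ (fun σ : ↥X => (boundaryMatrix n d)ᵀ σ.1)) :
    LinearIndependent ℚ
      (fun σ : {σ : {s : Finset (Fin n) // s.card = d + 1} // v ∈ σ.1 ∧
          (boundaryMatrix n d)ᵀ σ ∈ Submodule.span ℚ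
            ((fun σ' : {s : Finset (Fin n) // s.card = d + 1} =>
              (boundaryMatrix n d)ᵀ σ') '' (X : Set _))} =>
        (boundaryMatrix n d)ᵀ σ.1) ∧
    Nat.card {σ : {s : Finset (Fin n) // s.card = d + 1} // v ∈ σ.1 ∧
        (boundaryMatrix n d)ᵀ σ ∈ Submodule.span ℚ
          ((fun σ' : {s : Finset (Fin n) // s.card = d + 1} =>
            (boundaryMatrix n d)ᵀ σ') '' (X : Set _))} ≤ X.card := by
  set f : {s : Finset (Fin n) // s.card = d + 1} → ({s : Finset (Fin n) // s.card = d} → ℚ) :=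
    fun σ' => (boundaryMatrix n d)ᵀ σ' with hf
  set W : Submodule ℚ ({s : Finset (Fin n) // s.card = d} → ℚ) :=
    Submodule.span ℚ (f '' (X : Set _)) with hW
  have hind : LinearIndependent ℚ
      (fun σ : {σ : {s : Finset (Fin n) // s.card = d + 1} // v ∈ σ.1 ∧ f σ ∈ W} => f σ.1) := by
    have := (star_indep n d v).comp
      (fun σ : {σ : {s : Finset (Fin n) // s.card = d + 1} // v ∈ σ.1 ∧ f σ ∈ W} =>
        (⟨σ.1, σ.2.1⟩ : {σ : {s : Finset (Fin n) // s.card = d + 1} // v ∈ σ.1.1}))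
      (fun a b hab => by simpa [Subtype.ext_iff] using hab)
    exact this
  refine ⟨hind, ?_⟩
  haveI : Fintype {σ : {s : Finset (Fin n) // s.card = d + 1} // v ∈ σ.1 ∧ f σ ∈ W} :=
    Fintype.ofFinite _
  -- cardinality bound
  have hmem : ∀ σ : {σ : {s : Finset (Fin n) // s.card = d + 1} // v ∈ σ.1 ∧ f σ ∈ W},
      f σ.1 ∈ W := fun σ => σ.2.2
  have hindW : LinearIndependent ℚ
      (fun σ : {σ : {s : Finset (Fin n) // s.card = d + 1} // v ∈ σ.1 ∧ f σ ∈ W} =>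
        (⟨f σ.1, hmem σ⟩ : W)) := by
    apply LinearIndependent.of_comp W.subtype
    exact hind
  have hfin : FiniteDimensional ℚ W := by infer_instance
  have hcard := hindW.fintype_card_le_finrank
  have hrank : Module.finrank ℚ W ≤ X.card := by
    rw [hW]
    have : f '' (X : Set _) = ((X.image f : Finset _) : Set _) := by
      rw [Finset.coe_image]
    rw [this]
    exact le_trans (finrank_span_finset_le_card _) (Finset.card_image_le)
  rw [Nat.card_eq_fintype_card]
  exact le_trans hcard hrank
end

section
/- The number of n-vertex d-hypertrees satisfies |T_{n,d}| >= (n/(d+1))^{C(n-1,d)}, given the shadow bound: for every d-acyclic set X of d-faces, the number of d-faces extending X to a larger d-acyclic set is at least C(n,d+1)·(1 - |X|/C(n-1,d)). -/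
/-!
Let `N = C(n-1,d)` and let `a_k` count the `d`-acyclic sets of `k` faces. The shadow bound gives
each of them at least `C(n,d+1)(1 - k/N) = n/(d+1) · (N - k)` acyclic one-face extensions, and
each acyclic `(k+1)`-set arises from at most `k+1` of them, so
`n/(d+1) · (N - k) · a_k ≤ (k+1) a_{k+1}`. Iterating from `a_0 = 1` gives
`N! a_N ≥ (n/(d+1))^N N!`. Acyclic sets of `N` faces are hypertrees because `rank ∂_d ≤ N`:
for a face `σ` missing the vertex `0`, `∂∂(0 * σ) = 0` writes `∂σ` as a combination of boundaries
of faces through `0`, and there are only `N` of those.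
-/

open Matrix

open Finset

section Extension

variable {α : Type*} [Fintype α] [DecidableEq α] (P : Finset α → Prop)

theorem mul_card_le_succ_mul_card (m : ℝ) (k : ℕ)
    (hext : ∀ X : Finset α, X.card = k → P X → m ≤ Nat.card {a // a ∉ X ∧ P (insert a X)}) :
    m * Nat.card {X : Finset α // X.card = k ∧ P X} ≤
      (k + 1) * Nat.card {Y : Finset α // Y.card = k + 1 ∧ P Y} := by
  classical
  simp only [Nat.card_eq_fintype_card, Fintype.card_subtype]
  let s : Finset (Finset α) := {X | X.card = k ∧ P X}
  let t : Finset (Finset α) := {Y | Y.card = k + 1 ∧ P Y}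
  have above : ∀ X ∈ s, m ≤ #(t.bipartiteAbove (· ⊆ ·) X) := by
    intro X hX
    obtain ⟨hXk, hPX⟩ := (mem_filter.mp hX).2
    refine (hext X hXk hPX).trans ?_
    rw [Nat.card_eq_fintype_card, Fintype.card_subtype, Nat.cast_le]
    refine card_le_card_of_injOn (insert · X) (fun a ha => ?_) ?_
    · obtain ⟨haX, hPa⟩ := (mem_filter.mp ha).2
      simp [bipartiteAbove, t, card_insert_of_notMem haX, hXk, hPa, subset_insert]
    · intro a ha b hb hab
      have : a ∈ insert b X := by
        rw [← show insert a X = insert b X from hab]; exact mem_insert_self a X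
      exact (mem_insert.mp this).resolve_right (mem_filter.mp ha).2.1
  have below : ∀ Y ∈ t, #(s.bipartiteBelow (· ⊆ ·) Y) ≤ (k + 1 : ℝ) := by
    intro Y hY
    have hYk : Y.card = k + 1 := (mem_filter.mp hY).2.1
    have hsub : s.bipartiteBelow (· ⊆ ·) Y ⊆ Y.powersetCard k := fun X hX => by
      simp only [bipartiteBelow, s, mem_filter, mem_univ, true_and] at hX
      exact mem_powersetCard.mpr ⟨hX.2, hX.1.1⟩
    have := card_le_card hsub
    rw [card_powersetCard, hYk, Nat.choose_succ_self_right] at this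
    exact_mod_cast this
  have := card_nsmul_le_card_nsmul (R := ℝ) (r := fun (X Y : Finset α) => X ⊆ Y) above below
  simpa only [nsmul_eq_mul, mul_comm] using this

theorem prod_le_factorial_mul_card (m : ℕ → ℝ) (hP : P ∅)
    (hext : ∀ X : Finset α, P X → m X.card ≤ Nat.card {a // a ∉ X ∧ P (insert a X)}) :
    ∀ k, (∀ i < k, 0 ≤ m i) →
      ∏ i ∈ range k, m i ≤ k.factorial * Nat.card {X : Finset α // X.card = k ∧ P X}
  | 0, _ => by
    have : Nonempty {X : Finset α // X.card = 0 ∧ P X} := ⟨⟨∅, card_empty, hP⟩⟩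
    simpa [Nat.one_le_iff_ne_zero, Nat.pos_iff_ne_zero] using
      Nat.card_pos (α := {X : Finset α // X.card = 0 ∧ P X})
  | k + 1, hm => by
    have ih := prod_le_factorial_mul_card m hP hext k fun i hi => hm i (by omega)
    have hstep := mul_card_le_succ_mul_card P (m k) k fun X hXk hPX => hXk ▸ hext X hPX
    calc ∏ i ∈ range (k + 1), m i = (∏ i ∈ range k, m i) * m k := prod_range_succ m k
      _ ≤ k.factorial * Nat.card {X : Finset α // X.card = k ∧ P X} * m k :=
        mul_le_mul_of_nonneg_right ih (hm k k.lt_succ_self)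
      _ = k.factorial * (m k * Nat.card {X : Finset α // X.card = k ∧ P X}) := by ring
      _ ≤ k.factorial * ((k + 1) * Nat.card {Y : Finset α // Y.card = k + 1 ∧ P Y}) := by
        gcongr
      _ = (k + 1).factorial * Nat.card {X : Finset α // X.card = k + 1 ∧ P X} := by
        push_cast [Nat.factorial_succ]; ring

end Extension

theorem sum_sum_erase_eq_zero_of_antisymm {ι R : Type*} [DecidableEq ι] [CommRing R]
    [NoZeroDivisors R] [CharZero R] (s : Finset ι) (f : ι → ι → R)
    (hf : ∀ a ∈ s, ∀ b ∈ s, a ≠ b → f a b = -f b a) :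
    ∑ a ∈ s, ∑ b ∈ s.erase a, f a b = 0 := by
  have hswap : ∑ a ∈ s, ∑ b ∈ s.erase a, f a b = ∑ b ∈ s, ∑ a ∈ s.erase b, f a b :=
    sum_comm' fun a b => by simp only [mem_erase]; tauto
  refine self_eq_neg.mp (hswap.trans ?_)
  rw [← sum_neg_distrib]
  refine sum_congr rfl fun b hb => ?_
  rw [← sum_neg_distrib]
  exact sum_congr rfl fun a ha => hf a (mem_of_mem_erase ha) b hb (ne_of_mem_erase ha)

section Boundary

variable {α : Type*} [LinearOrder α]

/-- Defined for every vertex set `s`, not only for `(d+1)`-sets, so that the boundaries of the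
facets `ρ.erase v` of an arbitrary `ρ` need no cardinality proofs. -/
def faceBoundary (d : ℕ) (s : Finset α) : {τ : Finset α // τ.card = d} → ℚ := fun τ =>
  if τ.1 ⊆ s then ∑ v ∈ s \ τ.1, (-1 : ℚ) ^ #{w ∈ s | w < v} else 0

theorem boundaryMatrix_transpose_apply {n d : ℕ} (σ : {s : Finset (Fin n) // s.card = d + 1}) :
    (boundaryMatrix n d)ᵀ σ = faceBoundary d σ.1 := rfl

theorem neg_one_pow_card_lt_mul_erase_antisymm {s : Finset α} {a b : α} (ha : a ∈ s)
    (hb : b ∈ s) (hab : a ≠ b) :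
    (-1 : ℚ) ^ #{w ∈ s | w < a} * (-1) ^ #{w ∈ s.erase a | w < b} =
      -((-1) ^ #{w ∈ s | w < b} * (-1) ^ #{w ∈ s.erase b | w < a}) := by
  wlog hlt : a < b generalizing a b
  · rw [this hb ha hab.symm (lt_of_le_of_ne (not_lt.mp hlt) hab.symm), neg_neg]
  have hmem : a ∈ {w ∈ s | w < b} := mem_filter.mpr ⟨ha, hlt⟩
  have hpos : 0 < #{w ∈ s | w < b} := card_pos.mpr ⟨a, hmem⟩
  have h_erase_a : {w ∈ s.erase a | w < b} = {w ∈ s | w < b}.erase a := filter_erase _ _ _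
  have h_erase_b : {w ∈ s.erase b | w < a} = {w ∈ s | w < a} := by
    rw [filter_erase, erase_eq_of_notMem]
    simp only [mem_filter, not_and, not_lt]
    exact fun _ => hlt.le
  rw [h_erase_a, h_erase_b, card_erase_of_mem hmem]
  obtain ⟨c, hc⟩ := Nat.exists_eq_add_of_lt hpos
  rw [hc, Nat.add_sub_cancel, pow_succ]
  ring

theorem sum_neg_one_pow_smul_faceBoundary_erase (d : ℕ) (ρ : Finset α) :
    ∑ v ∈ ρ, (-1 : ℚ) ^ #{w ∈ ρ | w < v} • faceBoundary d (ρ.erase v) = 0 := by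
  funext τ
  simp only [Finset.sum_apply, Pi.smul_apply, smul_eq_mul, faceBoundary, Pi.zero_apply, mul_ite,
    mul_zero, subset_erase]
  by_cases hτ : τ.1 ⊆ ρ
  · -- the coefficient at `τ` sums over ordered pairs of distinct vertices of `ρ \ τ`, and the
    -- two orders of each pair contribute opposite signs
    simp only [hτ, true_and]
    rw [← sum_filter, filter_notMem_eq_sdiff]
    simp only [erase_sdiff_comm, mul_sum]
    exact sum_sum_erase_eq_zero_of_antisymm _ _ fun a ha b hb hab =>
      neg_one_pow_card_lt_mul_erase_antisymm (sdiff_subset ha) (sdiff_subset hb) hab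
  · exact sum_eq_zero fun v _ => if_neg fun h => hτ h.1

end Boundary

section Cone

variable {n : ℕ} [NeZero n] (d : ℕ)

theorem faceBoundary_mem_span_cone {σ : Finset (Fin n)} (hσ : σ.card = d + 1) :
    faceBoundary d σ ∈ Submodule.span ℚ (Set.range fun τ : powersetCard d (univ.erase 0) =>
      faceBoundary d (insert 0 τ.1)) := by
  have mem_cone : ∀ τ : Finset (Fin n), 0 ∉ τ → τ.card = d →
      faceBoundary d (insert 0 τ) ∈ Submodule.span ℚ (Set.range fun τ : powersetCard d
        (univ.erase 0) => faceBoundary d (insert 0 τ.1)) :=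
    fun τ h0 hτ => Submodule.subset_span ⟨⟨τ, mem_powersetCard.mpr
      ⟨fun x hx => mem_erase.mpr ⟨ne_of_mem_of_not_mem hx h0, mem_univ x⟩, hτ⟩⟩, rfl⟩
  by_cases h0 : 0 ∈ σ
  · rw [← insert_erase h0]
    exact mem_cone _ (notMem_erase 0 σ) (by rw [card_erase_of_mem h0, hσ, Nat.add_sub_cancel])
  · have hrel := sum_neg_one_pow_smul_faceBoundary_erase d (insert 0 σ)
    have h_sign : #{w ∈ insert 0 σ | w < 0} = 0 :=
      card_eq_zero.mpr (filter_false_of_mem fun w _ => Fin.not_lt_zero w)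
    rw [sum_insert h0, h_sign, pow_zero, one_smul, erase_insert h0] at hrel
    rw [eq_neg_of_add_eq_zero_left hrel]
    refine Submodule.neg_mem _ (Submodule.sum_mem _ fun v hv => Submodule.smul_mem _ _ ?_)
    rw [erase_insert_of_ne (ne_of_mem_of_not_mem hv h0).symm]
    exact mem_cone _ (fun h => h0 (mem_of_mem_erase h))
      (by rw [card_erase_of_mem hv, hσ, Nat.add_sub_cancel])

theorem finrank_span_boundaryMatrix_le :
    Module.finrank ℚ (Submodule.span ℚ (Set.range (boundaryMatrix n d)ᵀ)) ≤ (n - 1).choose d := by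
  calc Module.finrank ℚ (Submodule.span ℚ (Set.range (boundaryMatrix n d)ᵀ))
      ≤ Module.finrank ℚ (Submodule.span ℚ (Set.range fun τ : powersetCard d (univ.erase 0) =>
          faceBoundary d (insert (0 : Fin n) τ.1))) := by
        refine Submodule.finrank_mono (Submodule.span_le.mpr ?_)
        rintro _ ⟨σ, rfl⟩
        rw [boundaryMatrix_transpose_apply]
        exact faceBoundary_mem_span_cone d σ.2
    _ ≤ Fintype.card (powersetCard d (univ.erase (0 : Fin n))) := finrank_range_le_card _
    _ = (n - 1).choose d := by
        rw [Fintype.card_coe, card_powersetCard, card_erase_of_mem (mem_univ 0), card_univ,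
          Fintype.card_fin]

end Cone

theorem span_boundaryMatrix_eq_of_linearIndependent {n d : ℕ} [NeZero n]
    {T : Finset {s : Finset (Fin n) // s.card = d + 1}} (hT : T.card = (n - 1).choose d)
    (hind : LinearIndependent ℚ fun σ : ↥T => (boundaryMatrix n d)ᵀ σ.1) :
    Submodule.span ℚ ((fun σ => (boundaryMatrix n d)ᵀ σ) '' T) =
      Submodule.span ℚ (Set.range (boundaryMatrix n d)ᵀ) := by
  refine Submodule.eq_of_le_of_finrank_le (Submodule.span_mono (Set.image_subset_range _ _)) ?_
  have hrank := finrank_span_eq_card hind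
  rw [Fintype.card_coe, hT] at hrank
  rw [Set.image_eq_range]
  exact hrank ▸ finrank_span_boundaryMatrix_le d

theorem choose_mul_one_sub_div_eq {n d : ℕ} (hn : d < n) (x : ℝ) :
    (n.choose (d + 1) : ℝ) * (1 - x / (n - 1).choose d) = n / (d + 1) * ((n - 1).choose d - x) := by
  have hN : ((n - 1).choose d : ℝ) ≠ 0 := Nat.cast_ne_zero.mpr (Nat.choose_pos (by omega)).ne'
  have key : (n.choose (d + 1) : ℝ) * (d + 1) = n * (n - 1).choose d := by
    have := Nat.add_one_mul_choose_eq (n - 1) d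
    rw [Nat.sub_add_cancel (by omega : 1 ≤ n)] at this
    exact_mod_cast this.symm
  field_simp
  linear_combination ((n - 1).choose d - x) * key

theorem prod_range_sub_eq_factorial {R : Type*} [CommRing R] (N : ℕ) :
    ∏ i ∈ range N, ((N : R) - i) = N.factorial := by
  rw [← Nat.descFactorial_self, Nat.descFactorial_eq_prod_range, Nat.cast_prod]
  exact prod_congr rfl fun i hi => by rw [Nat.cast_sub (mem_range.mp hi).le]

theorem count_hypertrees_lower_general (n d : ℕ) (hn : d < n)
    (hshadow : ∀ X : Finset {s : Finset (Fin n) // s.card = d + 1},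
      LinearIndependent ℚ (fun σ : ↥X => (boundaryMatrix n d)ᵀ σ.1) →
      (n.choose (d + 1) : ℝ) * (1 - (X.card : ℝ) / ((n - 1).choose d : ℝ)) ≤
        Nat.card {σ : {s : Finset (Fin n) // s.card = d + 1} // σ ∉ X ∧
          LinearIndependent ℚ
            (fun τ : ↥(insert σ X) => (boundaryMatrix n d)ᵀ τ.1)}) :
    ((n : ℝ) / (d + 1)) ^ ((n - 1).choose d) ≤
      Nat.card {T : Finset {s : Finset (Fin n) // s.card = d + 1} //
        T.card = (n - 1).choose d ∧
        LinearIndependent ℚ (fun σ : ↥T => (boundaryMatrix n d)ᵀ σ.1) ∧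
        Submodule.span ℚ ((fun σ : {s : Finset (Fin n) // s.card = d + 1} =>
            (boundaryMatrix n d)ᵀ σ) '' (T : Set _)) =
          Submodule.span ℚ (Set.range (boundaryMatrix n d)ᵀ)} := by
  have : NeZero n := ⟨by omega⟩
  set N := (n - 1).choose d
  have hbound := prod_le_factorial_mul_card
    (fun X => LinearIndependent ℚ fun σ : ↥X => (boundaryMatrix n d)ᵀ σ.1)
    (fun i => n / (d + 1) * (N - i)) linearIndependent_empty_type
    (fun X hX => choose_mul_one_sub_div_eq hn X.card ▸ hshadow X hX) N
    fun i hi => mul_nonneg (by positivity) (sub_nonneg.mpr (by exact_mod_cast hi.le))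
  rw [prod_mul_distrib, prod_const, card_range, prod_range_sub_eq_factorial, mul_comm] at hbound
  refine (le_of_mul_le_mul_left hbound (by positivity)).trans_eq <|
    congrArg Nat.cast (Nat.card_congr (Equiv.subtypeEquivRight fun T => ?_))
  exact ⟨fun h => ⟨h.1, h.2, span_boundaryMatrix_eq_of_linearIndependent h.1 h.2⟩,
    fun h => ⟨h.1, h.2.1⟩⟩

/-- Given the shadow bound — every `d`-acyclic set `X` of `d`-faces admits at
least `C(n,d+1)·(1 - |X|/C(n-1,d))` one-face acyclic extensions — the number of
`d`-hypertrees on `n` vertices is at least `(n/(d+1))^{C(n-1,d)}`. -/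
theorem count_hypertrees_lower (n d : ℕ) (hd : 1 ≤ d) (hn : d < n)
    (hshadow : ∀ X : Finset {s : Finset (Fin n) // s.card = d + 1},
      LinearIndependent ℚ (fun σ : ↥X => (boundaryMatrix n d)ᵀ σ.1) →
      (n.choose (d + 1) : ℝ) * (1 - (X.card : ℝ) / ((n - 1).choose d : ℝ)) ≤
        Nat.card {σ : {s : Finset (Fin n) // s.card = d + 1} // σ ∉ X ∧
          LinearIndependent ℚ
            (fun τ : ↥(insert σ X) => (boundaryMatrix n d)ᵀ τ.1)}) :
    ((n : ℝ) / (d + 1)) ^ ((n - 1).choose d) ≤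
      Nat.card {T : Finset {s : Finset (Fin n) // s.card = d + 1} //
        T.card = (n - 1).choose d ∧
        LinearIndependent ℚ (fun σ : ↥T => (boundaryMatrix n d)ᵀ σ.1) ∧
        Submodule.span ℚ ((fun σ : {s : Finset (Fin n) // s.card = d + 1} =>
            (boundaryMatrix n d)ᵀ σ) '' (T : Set _)) =
          Submodule.span ℚ (Set.range (boundaryMatrix n d)ᵀ)} :=
  count_hypertrees_lower_general n d hn hshadow
end
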